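/- Let q be a Boolean conjunctive query and D = Dˣ ∪ Dⁿ a database instance such that Dˣ ⊭ q and D ⊨ q. Then an endogenous tuple t ∈ Dⁿ is an actual cause for q in D if and only if there exists a non-redundant member c of the n-lineage of q on D with t ∈ c. -/

import Mathlib

/-- An atom of a Boolean conjunctive query: a relation symbol applied to a
tuple (list) of variables, marked endogenous (`endo = true`) or exogenous. -/
structure DBAtom (Rel Var : Type) where
  rel : Rel
  args : List Var
  endo : Bool
deriving DecidableEq

/-- A database tuple: it belongs to one relation and carries a tuple of constants. -/
structure DBTup (Rel Const : Type) where
  rel : Rel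
  args : List Const
deriving DecidableEq

/-- The tuple obtained by applying a valuation `θ` to an atom. -/
def DBAtom.app {Rel Var Const : Type} (g : DBAtom Rel Var) (θ : Var → Const) :
    DBTup Rel Const :=
  ⟨g.rel, g.args.map θ⟩

/-- `dbSat D q` holds iff `D ⊨ q`: there is a valuation `θ` of the variables of `q`
into the domain with `θ(g) ∈ D` for every atom `g` of `q`. -/
def dbSat {Rel Var Const : Type} (D : Finset (DBTup Rel Const))
    (q : Finset (DBAtom Rel Var)) : Prop :=
  ∃ θ : Var → Const, ∀ g ∈ q, g.app θ ∈ D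

/-- `t` is an actual cause for `q` in `D` (with endogenous tuples `Dn`):
there is a contingency set `Γ ⊆ Dn` with `t ∉ Γ` such that
`D − Γ ⊨ q` and `D − Γ − {t} ⊭ q`. -/
def isActualCause {Rel Var Const : Type} [DecidableEq Rel] [DecidableEq Const]
    (q : Finset (DBAtom Rel Var)) (D Dn : Finset (DBTup Rel Const))
    (t : DBTup Rel Const) : Prop :=
  ∃ Γ : Finset (DBTup Rel Const), Γ ⊆ Dn ∧ t ∉ Γ ∧
    dbSat (D \ Γ) q ∧ ¬ dbSat ((D \ Γ).erase t) q

/-- The n-lineage of `q` on `D`: the family of the sets `c^θ ∩ Dⁿ`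
over all valuations `θ` with `θ(g) ∈ D` for all atoms `g` of `q`, where
`c^θ = {θ(g) : g an atom of q}`. -/
def nLineage {Rel Var Const : Type} [DecidableEq Rel] [DecidableEq Const]
    (q : Finset (DBAtom Rel Var)) (D Dn : Finset (DBTup Rel Const)) :
    Set (Finset (DBTup Rel Const)) :=
  {c | ∃ θ : Var → Const, (∀ g ∈ q, g.app θ ∈ D) ∧
    c = (q.image fun g => g.app θ) ∩ Dn}

/-!
Deleting a set `Γ` of endogenous tuples keeps exactly those valuations whose
n-lineage conjunct is disjoint from `Γ`. Hence `t` is a cause with contingency `Γ`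
iff some conjunct avoids `Γ` and every conjunct avoiding `Γ` contains `t`. Given
such a `Γ`, a minimal conjunct below one that avoids `Γ` also avoids `Γ`, so it
contains `t`; conversely, for a minimal conjunct `c ∋ t`, take `Γ = Dⁿ \ c`: the
conjuncts avoiding it are the subsets of `c`, and by minimality only `c` itself.
-/

theorem Finset.exists_survivors_contain_iff_exists_minimal {α : Type*} [DecidableEq α]
    (L : Set (Finset α)) (U : Finset α) (hL : ∀ c ∈ L, c ⊆ U) (t : α) :
    (∃ Γ ⊆ U, t ∉ Γ ∧ (∃ c ∈ L, Disjoint c Γ) ∧ ∀ c ∈ L, Disjoint c Γ → t ∈ c) ↔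
      ∃ c, Minimal (· ∈ L) c ∧ t ∈ c := by
  constructor
  · rintro ⟨Γ, -, -, ⟨c₀, hc₀, hc₀Γ⟩, hsurv⟩
    obtain ⟨c, hcc₀, hmin⟩ := exists_minimal_le_of_wellFoundedLT (· ∈ L) c₀ hc₀
    exact ⟨c, hmin, hsurv c hmin.prop (hc₀Γ.mono_left hcc₀)⟩
  · rintro ⟨c, hmin, htc⟩
    refine ⟨U \ c, sdiff_subset, fun h => (mem_sdiff.1 h).2 htc,
      ⟨c, hmin.prop, disjoint_sdiff⟩, fun c' hc' hdisj => ?_⟩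
    have hc'c : c' ⊆ c := fun x hx =>
      by_contra fun hxc => disjoint_left.1 hdisj hx (mem_sdiff.2 ⟨hL c' hc' hx, hxc⟩)
    by_contra htc'
    exact hmin.not_lt hc' (ssubset_iff_of_subset hc'c |>.2 ⟨t, htc, htc'⟩)

section Causality

variable {Rel Var Const : Type} [DecidableEq Rel] [DecidableEq Const]
  {q : Finset (DBAtom Rel Var)} {D Dn Γ : Finset (DBTup Rel Const)}

theorem subset_of_mem_nLineage {c : Finset (DBTup Rel Const)} (hc : c ∈ nLineage q D Dn) :
    c ⊆ Dn := by
  obtain ⟨θ, -, rfl⟩ := hc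
  exact Finset.inter_subset_right

theorem dbSat_sdiff_iff (hΓ : Γ ⊆ Dn) :
    dbSat (D \ Γ) q ↔ ∃ c ∈ nLineage q D Dn, Disjoint c Γ := by
  constructor
  · rintro ⟨θ, hθ⟩
    refine ⟨_, ⟨θ, fun g hg => (Finset.mem_sdiff.1 (hθ g hg)).1, rfl⟩,
      Finset.disjoint_left.2 fun x hx hxΓ => ?_⟩
    obtain ⟨g, hg, rfl⟩ := Finset.mem_image.1 (Finset.mem_inter.1 hx).1
    exact (Finset.mem_sdiff.1 (hθ g hg)).2 hxΓ
  · rintro ⟨_, ⟨θ, hθ, rfl⟩, hdisj⟩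
    refine ⟨θ, fun g hg => Finset.mem_sdiff.2 ⟨hθ g hg, fun hgΓ => ?_⟩⟩
    exact Finset.disjoint_left.1 hdisj
      (Finset.mem_inter.2 ⟨Finset.mem_image_of_mem _ hg, hΓ hgΓ⟩) hgΓ

theorem isActualCause_iff_exists_survivors_contain {t : DBTup Rel Const} (ht : t ∈ Dn) :
    isActualCause q D Dn t ↔
      ∃ Γ ⊆ Dn, t ∉ Γ ∧ (∃ c ∈ nLineage q D Dn, Disjoint c Γ) ∧
        ∀ c ∈ nLineage q D Dn, Disjoint c Γ → t ∈ c := by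
  refine exists_congr fun Γ => and_congr_right fun hΓ => and_congr_right fun _ => ?_
  rw [dbSat_sdiff_iff hΓ, ← Finset.sdiff_insert, dbSat_sdiff_iff (Finset.insert_subset ht hΓ)]
  simp only [Finset.disjoint_insert_right, not_exists, not_and]
  exact and_congr_right fun _ => forall₂_congr fun _ _ => not_imp_not

end Causality

theorem statement0_general {Rel Var Const : Type}
    [DecidableEq Rel] [DecidableEq Const]
    (q : Finset (DBAtom Rel Var)) (Dx Dn : Finset (DBTup Rel Const))
    (t : DBTup Rel Const) (ht : t ∈ Dn) :
    isActualCause q (Dx ∪ Dn) Dn t ↔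
      ∃ c ∈ nLineage q (Dx ∪ Dn) Dn,
        (∀ c' ∈ nLineage q (Dx ∪ Dn) Dn, ¬ c' ⊂ c) ∧ t ∈ c := by
  rw [isActualCause_iff_exists_survivors_contain ht,
    Finset.exists_survivors_contain_iff_exists_minimal _ _ (fun _ => subset_of_mem_nLineage)]
  simp only [minimal_iff_forall_lt, and_assoc]
  exact ⟨fun ⟨c, hc, hmin, htc⟩ => ⟨c, hc, fun c' hc' hlt => hmin hlt hc', htc⟩,
    fun ⟨c, hc, hmin, htc⟩ => ⟨c, hc, fun c' hlt hc' => hmin c' hc' hlt, htc⟩⟩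

/-- Let `q` be a Boolean conjunctive query and `D = Dˣ ∪ Dⁿ` a database
instance such that `Dˣ ⊭ q` and `D ⊨ q`. Then an endogenous tuple `t ∈ Dⁿ` is an actual
cause for `q` in `D` iff there exists a non-redundant member `c` of the n-lineage of `q`
on `D` with `t ∈ c`. -/
theorem statement0 {Rel Var Const : Type}
    [DecidableEq Rel] [DecidableEq Var] [DecidableEq Const]
    (q : Finset (DBAtom Rel Var)) (Dx Dn : Finset (DBTup Rel Const))
    (hdisj : Disjoint Dx Dn)
    (hx : ¬ dbSat (Const := Const) Dx q) (hD : dbSat (Dx ∪ Dn) q)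
    (t : DBTup Rel Const) (ht : t ∈ Dn) :
    isActualCause q (Dx ∪ Dn) Dn t ↔
      ∃ c ∈ nLineage q (Dx ∪ Dn) Dn,
        (∀ c' ∈ nLineage q (Dx ∪ Dn) Dn, ¬ c' ⊂ c) ∧ t ∈ c :=
  statement0_general q Dx Dn t ht
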